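/- The entropy of the orthonormal Chebyshev polynomials of the second kind is E(Û_n) = −n/(n+1) for all n ≥ 0, where Û_n is the Chebyshev polynomial of the second kind of degree n normalized so that ∫_{−1}^1 (Û_n)² ŵ₁ = 1 with ŵ₁(x) = (2/π)√(1−x²), and E(Û_n) = −∫_{−1}^1 (Û_n(x))² log((Û_n(x))²) ŵ₁(x) dx. -/

import Mathlib

open Finset

/-- Pochhammer symbol (rising factorial) for a real argument. -/
noncomputable def poch (a : ℝ) (k : ℕ) : ℝ := ∏ i ∈ Finset.range k, (a + i)

/-- Gegenbauer (ultraspherical) polynomial `C_n^{(λ)}(x)`, via its standard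
explicit expansion. -/
noncomputable def gegen (lam : ℝ) (n : ℕ) (x : ℝ) : ℝ :=
  ∑ k ∈ Finset.range (n / 2 + 1),
    (-1 : ℝ) ^ k * poch lam (n - k) /
      ((Nat.factorial k : ℝ) * (Nat.factorial (n - 2 * k) : ℝ)) * (2 * x) ^ (n - 2 * k)

section Aux

open Real Polynomial Polynomial.Chebyshev MeasureTheory intervalIntegral

lemma poch_one (k : ℕ) : poch 1 k = (Nat.factorial k : ℝ) := by
  induction k with
  | zero => simp [poch]
  | succ k ih =>
    rw [poch, Finset.prod_range_succ, ← poch, ih, Nat.factorial_succ]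
    push_cast
    ring

/-- The generic term of the Chebyshev-U expansion. -/
noncomputable def chebTerm (x : ℝ) (n k : ℕ) : ℝ :=
  (-1 : ℝ) ^ k * ((n - k).factorial : ℝ) /
    ((Nat.factorial k : ℝ) * ((n - 2 * k).factorial : ℝ)) * (2 * x) ^ (n - 2 * k)

lemma gegen_one_eq (n : ℕ) (x : ℝ) :
    gegen 1 n x = ∑ k ∈ Finset.range (n / 2 + 1), chebTerm x n k := by
  unfold gegen chebTerm
  refine Finset.sum_congr rfl fun k _ => ?_
  rw [poch_one]

lemma chebTerm_zero (n : ℕ) (x : ℝ) : chebTerm x n 0 = (2 * x) ^ n := by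
  simp only [chebTerm, pow_zero, one_mul, Nat.sub_zero, Nat.mul_zero, Nat.factorial_zero,
    Nat.cast_one]
  rw [div_self (Nat.cast_ne_zero.2 n.factorial_ne_zero), one_mul]

lemma chebTerm_gen (a j : ℕ) (x : ℝ) :
    chebTerm x (a + 2 * j + 3) (j + 1) =
      2 * x * chebTerm x (a + 2 * j + 2) (j + 1) - chebTerm x (a + 2 * j + 1) j := by
  unfold chebTerm
  have h1 : a + 2 * j + 3 - (j + 1) = a + j + 2 := by omega
  have h2 : a + 2 * j + 3 - 2 * (j + 1) = a + 1 := by omega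
  have h3 : a + 2 * j + 2 - (j + 1) = a + j + 1 := by omega
  have h4 : a + 2 * j + 2 - 2 * (j + 1) = a := by omega
  have h5 : a + 2 * j + 1 - j = a + j + 1 := by omega
  have h6 : a + 2 * j + 1 - 2 * j = a + 1 := by omega
  rw [h1, h2, h3, h4, h5, h6]
  have hfa : ((a + j + 2).factorial : ℝ) = (a + j + 2) * (a + j + 1).factorial := by
    rw [show a + j + 2 = (a + j + 1) + 1 by ring, Nat.factorial_succ]; push_cast; ring
  have hfb : ((a + 1).factorial : ℝ) = (a + 1) * a.factorial := by
    rw [Nat.factorial_succ]; push_cast; ring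
  have hfc : ((j + 1).factorial : ℝ) = (j + 1) * j.factorial := by
    rw [Nat.factorial_succ]; push_cast; ring
  have hνα : (Nat.factorial j : ℝ) ≠ 0 := Nat.cast_ne_zero.2 j.factorial_ne_zero
  have hνβ : (Nat.factorial a : ℝ) ≠ 0 := Nat.cast_ne_zero.2 a.factorial_ne_zero
  rw [hfa, hfb, hfc, pow_succ, pow_succ]
  field_simp
  ring

lemma gegen_rec (n : ℕ) (x : ℝ) :
    gegen 1 (n + 2) x = 2 * x * gegen 1 (n + 1) x - gegen 1 n x := by
  rcases Nat.even_or_odd n with ⟨p, hp⟩ | ⟨p, hp⟩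
  · -- n = 2p
    subst hp
    have e1 : (p + p + 2) / 2 + 1 = p + 2 := by omega
    have e2 : (p + p + 1) / 2 + 1 = p + 1 := by omega
    have e3 : (p + p) / 2 + 1 = p + 1 := by omega
    rw [gegen_one_eq, gegen_one_eq, gegen_one_eq, e1, e2, e3]
    rw [Finset.sum_range_succ' (fun k => chebTerm x (p + p + 2) k) (p + 1),
      Finset.sum_range_succ (fun k => chebTerm x (p + p + 2) (k + 1)) p,
      Finset.sum_range_succ' (fun k => chebTerm x (p + p + 1) k) p,
      Finset.sum_range_succ (fun k => chebTerm x (p + p) k) p]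
    have hmain : ∀ k ∈ Finset.range p,
        chebTerm x (p + p + 2) (k + 1) =
          2 * x * chebTerm x (p + p + 1) (k + 1) - chebTerm x (p + p) k := by
      intro k hk
      rw [Finset.mem_range] at hk
      obtain ⟨d, hd⟩ : ∃ d, p = k + d + 1 := ⟨p - k - 1, by omega⟩
      subst hd
      calc chebTerm x (k + d + 1 + (k + d + 1) + 2) (k + 1)
          = chebTerm x (2 * d + 1 + 2 * k + 3) (k + 1) := by
            rw [show k + d + 1 + (k + d + 1) + 2 = 2 * d + 1 + 2 * k + 3 from by omega]
        _ = 2 * x * chebTerm x (2 * d + 1 + 2 * k + 2) (k + 1)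
              - chebTerm x (2 * d + 1 + 2 * k + 1) k := chebTerm_gen _ _ _
        _ = 2 * x * chebTerm x (k + d + 1 + (k + d + 1) + 1) (k + 1)
              - chebTerm x (k + d + 1 + (k + d + 1)) k := by
            rw [show 2 * d + 1 + 2 * k + 2 = k + d + 1 + (k + d + 1) + 1 from by omega,
              show 2 * d + 1 + 2 * k + 1 = k + d + 1 + (k + d + 1) from by omega]
    rw [Finset.sum_congr rfl hmain]
    have htop : chebTerm x (p + p + 2) (p + 1) = -chebTerm x (p + p) p := by
      unfold chebTerm
      have h1 : p + p + 2 - (p + 1) = p + 1 := by omega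
      have h2 : p + p + 2 - 2 * (p + 1) = 0 := by omega
      have h3 : p + p - p = p := by omega
      have h4 : p + p - 2 * p = 0 := by omega
      rw [h1, h2, h3, h4]
      have hfc : ((p + 1).factorial : ℝ) = (p + 1) * p.factorial := by
        rw [Nat.factorial_succ]; push_cast; ring
      have hν : (Nat.factorial p : ℝ) ≠ 0 := Nat.cast_ne_zero.2 p.factorial_ne_zero
      rw [hfc, pow_succ]
      field_simp
    have hzero : chebTerm x (p + p + 2) 0 = 2 * x * chebTerm x (p + p + 1) 0 := by
      rw [chebTerm_zero, chebTerm_zero, pow_succ]; ring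
    rw [Finset.sum_sub_distrib, htop, hzero, ← Finset.mul_sum]
    ring
  · -- n = 2p+1
    subst hp
    have e1 : (2 * p + 1 + 2) / 2 + 1 = p + 2 := by omega
    have e2 : (2 * p + 1 + 1) / 2 + 1 = p + 2 := by omega
    have e3 : (2 * p + 1) / 2 + 1 = p + 1 := by omega
    rw [gegen_one_eq, gegen_one_eq, gegen_one_eq, e1, e2, e3]
    rw [Finset.sum_range_succ' (fun k => chebTerm x (2 * p + 1 + 2) k) (p + 1),
      Finset.sum_range_succ' (fun k => chebTerm x (2 * p + 1 + 1) k) (p + 1)]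
    have hmain : ∀ k ∈ Finset.range (p + 1),
        chebTerm x (2 * p + 1 + 2) (k + 1) =
          2 * x * chebTerm x (2 * p + 1 + 1) (k + 1) - chebTerm x (2 * p + 1) k := by
      intro k hk
      rw [Finset.mem_range] at hk
      obtain ⟨d, hd⟩ : ∃ d, p = k + d := ⟨p - k, by omega⟩
      subst hd
      calc chebTerm x (2 * (k + d) + 1 + 2) (k + 1)
          = chebTerm x (2 * d + 2 * k + 3) (k + 1) := by
            rw [show 2 * (k + d) + 1 + 2 = 2 * d + 2 * k + 3 from by omega]
        _ = 2 * x * chebTerm x (2 * d + 2 * k + 2) (k + 1)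
              - chebTerm x (2 * d + 2 * k + 1) k := chebTerm_gen _ _ _
        _ = 2 * x * chebTerm x (2 * (k + d) + 1 + 1) (k + 1)
              - chebTerm x (2 * (k + d) + 1) k := by
            rw [show 2 * d + 2 * k + 2 = 2 * (k + d) + 1 + 1 from by omega,
              show 2 * d + 2 * k + 1 = 2 * (k + d) + 1 from by omega]
    rw [Finset.sum_congr rfl hmain]
    have hzero : chebTerm x (2 * p + 1 + 2) 0 = 2 * x * chebTerm x (2 * p + 1 + 1) 0 := by
      rw [chebTerm_zero, chebTerm_zero, pow_succ]; ring
    rw [Finset.sum_sub_distrib, hzero, ← Finset.mul_sum]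
    ring

lemma gegen_eq_chebyshevU (n : ℕ) (x : ℝ) : gegen 1 n x = (U ℝ n).eval x := by
  induction n using Nat.twoStepInduction with
  | zero => simp [gegen_one_eq, chebTerm_zero, U_zero]
  | one =>
    simp [gegen_one_eq, chebTerm_zero, U_one]
  | more n ih1 ih2 =>
    rw [gegen_rec, ih1, ih2]
    have : ((n : ℤ) + 2) = ((n + 2 : ℕ) : ℤ) := by push_cast; ring
    rw [← this, U_add_two]
    simp

/-- Trig polynomial `P_m`, equal to `sin(2mθ)·cot θ` on `(0,π)`. -/
noncomputable def Pm (m : ℕ) (θ : ℝ) : ℝ :=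
  2 * ∑ k ∈ Finset.range m, Real.cos (2 * k * θ) - 1 + Real.cos (2 * m * θ)

lemma Pm_continuous (m : ℕ) : Continuous (Pm m) := by
  unfold Pm
  fun_prop

lemma sin_mul_Pm (m : ℕ) (θ : ℝ) :
    Real.sin (2 * m * θ) * Real.cos θ = Real.sin θ * Pm m θ := by
  induction m with
  | zero => simp [Pm]
  | succ m ih =>
    have hstep : (2 * ((m : ℝ) + 1) * θ) = 2 * m * θ + 2 * θ := by ring
    have h2 : Real.sin (2 * (m : ℝ) * θ + 2 * θ)
        = Real.sin (2 * m * θ) * Real.cos (2 * θ) + Real.cos (2 * m * θ) * Real.sin (2 * θ) :=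
      Real.sin_add _ _
    have h3 : Real.cos (2 * (m : ℝ) * θ + 2 * θ)
        = Real.cos (2 * m * θ) * Real.cos (2 * θ) - Real.sin (2 * m * θ) * Real.sin (2 * θ) :=
      Real.cos_add _ _
    have hsq : Real.sin θ ^ 2 + Real.cos θ ^ 2 = 1 := Real.sin_sq_add_cos_sq θ
    have hss : Real.sin (2 * θ) = 2 * Real.sin θ * Real.cos θ := Real.sin_two_mul θ
    have hcc : Real.cos (2 * θ) = 2 * Real.cos θ ^ 2 - 1 := Real.cos_two_mul θ
    unfold Pm at ih ⊢
    rw [Finset.sum_range_succ]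
    push_cast
    rw [hstep, h2, h3, hss, hcc]
    linear_combination ih + 2 * Real.cos θ * Real.sin (2 * (m : ℝ) * θ) * hsq

lemma integral_cos_nat (k : ℕ) :
    ∫ θ in (0:ℝ)..Real.pi, Real.cos (2 * k * θ) = if k = 0 then Real.pi else 0 := by
  rcases Nat.eq_zero_or_pos k with hk | hk
  · subst hk; simp
  · have hc : (2 * (k : ℝ)) ≠ 0 := by positivity
    rw [if_neg hk.ne']
    have h := integral_comp_mul_left (a := (0:ℝ)) (b := Real.pi) (fun u => Real.cos u) hc
    rw [h, mul_zero, integral_cos, Real.sin_zero,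
      show 2 * (k:ℝ) * Real.pi = ((2*k : ℕ):ℝ) * Real.pi by push_cast; ring,
      Real.sin_nat_mul_pi]
    simp

lemma integral_Pm (m : ℕ) (hm : 1 ≤ m) :
    ∫ θ in (0:ℝ)..Real.pi, Pm m θ = Real.pi := by
  unfold Pm
  have hint : ∀ k : ℕ, IntervalIntegrable (fun θ => Real.cos (2 * k * θ))
      MeasureTheory.volume (0:ℝ) Real.pi := fun k =>
    (by fun_prop : Continuous fun θ : ℝ => Real.cos (2 * k * θ)).intervalIntegrable _ _
  have hintsum : IntervalIntegrable (fun θ => ∑ k ∈ Finset.range m, Real.cos (2 * k * θ))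
      MeasureTheory.volume (0:ℝ) Real.pi :=
    (by fun_prop : Continuous fun θ : ℝ => ∑ k ∈ Finset.range m, Real.cos (2 * k * θ)).intervalIntegrable _ _
  have hsum : (∑ k ∈ Finset.range m, if k = 0 then Real.pi else 0) = Real.pi := by
    rw [Finset.sum_ite_eq' (Finset.range m) 0 (fun _ => Real.pi),
      if_pos (Finset.mem_range.2 hm)]
  rw [integral_add ((hintsum.const_mul 2).sub intervalIntegrable_const) (hint m),
    integral_sub (hintsum.const_mul 2) intervalIntegrable_const,
    intervalIntegral.integral_const_mul, _root_.intervalIntegral.integral_finset_sum (fun k _ => hint k),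
    Finset.sum_congr rfl (fun k _ => integral_cos_nat k), hsum,
    integral_cos_nat m, if_neg (by omega : ¬ m = 0), integral_one]
  ring

/-- Continuous version of `(cos(2mθ) - cos(2θ))/sin θ`. -/
noncomputable def Vf (m : ℕ) (θ : ℝ) : ℝ :=
  -2 * (U ℝ (m : ℤ)).eval (Real.cos θ) * (U ℝ ((m : ℤ) - 2)).eval (Real.cos θ) * Real.sin θ

lemma Vf_continuous (m : ℕ) : Continuous (Vf m) := by
  unfold Vf
  exact ((continuous_const.mul ((Polynomial.continuous _).comp Real.continuous_cos)).mul
    ((Polynomial.continuous _).comp Real.continuous_cos)).mul Real.continuous_sin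

lemma cos_diff_eq (m : ℕ) (θ : ℝ) :
    Real.cos (2 * m * θ) - Real.cos (2 * θ) = Vf m θ * Real.sin θ := by
  have h := Real.cos_sub_cos (2 * m * θ) (2 * θ)
  have h1 : (2 * (m:ℝ) * θ + 2 * θ) / 2 = ((m:ℝ) + 1) * θ := by ring
  have h2 : (2 * (m:ℝ) * θ - 2 * θ) / 2 = ((m:ℝ) - 1) * θ := by ring
  have hU1 := Polynomial.Chebyshev.U_real_cos θ (m : ℤ)
  have hU2 := Polynomial.Chebyshev.U_real_cos θ ((m : ℤ) - 2)
  push_cast at hU1 hU2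
  rw [show ((m:ℝ) - 2 + 1) = (m:ℝ) - 1 by ring] at hU2
  rw [h1, h2] at h
  rw [h, ← hU1, ← hU2]
  unfold Vf
  ring

lemma sin_sq_log_periodic_integral (m : ℕ) (hm : 1 ≤ m) :
    ∫ θ in (0:ℝ)..Real.pi, Real.sin (m * θ) ^ 2 * Real.log (Real.sin (m * θ) ^ 2)
      = ∫ θ in (0:ℝ)..Real.pi, Real.sin θ ^ 2 * Real.log (Real.sin θ ^ 2) := by
  have hg : Continuous fun u : ℝ => Real.sin u ^ 2 * Real.log (Real.sin u ^ 2) :=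
    Real.continuous_mul_log.comp ((continuous_pow 2).comp Real.continuous_sin)
  have hp : Function.Periodic (fun u : ℝ => Real.sin u ^ 2 * Real.log (Real.sin u ^ 2))
      Real.pi := by
    intro u
    simp [Real.sin_add_pi, neg_sq]
  have hmne : ((m:ℝ)) ≠ 0 := by positivity
  have h1 := integral_comp_mul_left (a := (0:ℝ)) (b := Real.pi)
      (fun u => Real.sin u ^ 2 * Real.log (Real.sin u ^ 2)) hmne
  rw [h1, mul_zero]
  have h2 := hp.intervalIntegral_add_zsmul_eq (m : ℤ) 0
      (fun t1 t2 => hg.intervalIntegrable t1 t2)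
  simp only [zero_add, zsmul_eq_mul, Int.cast_natCast] at h2
  rw [h2, smul_eq_mul, ← mul_assoc, inv_mul_cancel₀ hmne, one_mul]

lemma key_integral (m : ℕ) (hm : 1 ≤ m) :
    ∫ θ in (0:ℝ)..Real.pi, Vf m θ * (Real.sin θ * Real.log (Real.sin θ))
      = Real.pi / 2 - Real.pi / (2 * m) := by
  have hm0 : (2 * (m:ℝ)) ≠ 0 := by positivity
  set F : ℝ → ℝ := fun θ =>
    (Real.sin (2 * m * θ) / (2 * m) - Real.sin (2 * θ) / 2) * Real.log (Real.sin θ) with hF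
  set φ : ℝ → ℝ := fun θ =>
    Vf m θ * (Real.sin θ * Real.log (Real.sin θ)) + (Pm m θ / (2 * m) - Pm 1 θ / 2) with hφ
  have hP1 : ∀ θ : ℝ, Real.sin (2 * θ) * Real.cos θ = Real.sin θ * Pm 1 θ := by
    intro θ
    have := sin_mul_Pm 1 θ
    norm_num at this
    exact this
  have hFeq : F = fun θ =>
      ((U ℝ (2 * (m:ℤ) - 1)).eval (Real.cos θ) / (2 * m) - 2 * Real.cos θ / 2) *
        (Real.sin θ * Real.log (Real.sin θ)) := by
    funext θ
    have hU := Polynomial.Chebyshev.U_real_cos θ (2 * (m:ℤ) - 1)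
    push_cast at hU
    rw [show (2 * (m:ℝ) - 1 + 1) = 2 * (m:ℝ) by ring] at hU
    have hs2 : Real.sin (2 * θ) = 2 * Real.cos θ * Real.sin θ := by
      rw [Real.sin_two_mul]; ring
    simp only [hF, ← hU, hs2]
    ring
  have hFcont : ContinuousOn F (Set.Icc 0 Real.pi) := by
    rw [hFeq]
    exact (((((Polynomial.continuous _).comp Real.continuous_cos).div_const _).sub
      ((continuous_const.mul Real.continuous_cos).div_const _)).mul
      (Real.continuous_mul_log.comp Real.continuous_sin)).continuousOn
  have hφcont : Continuous φ := by
    rw [hφ]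
    exact ((Vf_continuous m).mul
      (Real.continuous_mul_log.comp Real.continuous_sin)).add
      (((Pm_continuous m).div_const _).sub ((Pm_continuous 1).div_const _))
  have hderiv : ∀ θ ∈ Set.Ioo (0:ℝ) Real.pi, HasDerivAt F (φ θ) θ := by
    intro θ hθ
    have hs : 0 < Real.sin θ := Real.sin_pos_of_pos_of_lt_pi hθ.1 hθ.2
    have hi1 : HasDerivAt (fun θ : ℝ => 2 * (m:ℝ) * θ) (2 * (m:ℝ)) θ := by
      simpa using (hasDerivAt_id θ).const_mul (2 * (m:ℝ))
    have hi2 : HasDerivAt (fun θ : ℝ => 2 * θ) (2 : ℝ) θ := by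
      simpa using (hasDerivAt_id θ).const_mul (2 : ℝ)
    have hdA : HasDerivAt (fun θ : ℝ => Real.sin (2 * m * θ))
        (Real.cos (2 * m * θ) * (2 * m)) θ := (Real.hasDerivAt_sin _).comp θ hi1
    have hdB : HasDerivAt (fun θ : ℝ => Real.sin (2 * θ)) (Real.cos (2 * θ) * 2) θ :=
      (Real.hasDerivAt_sin _).comp θ hi2
    have hdC := (hdA.div_const (2 * (m:ℝ))).sub (hdB.div_const 2)
    have hdD : HasDerivAt (fun θ : ℝ => Real.log (Real.sin θ))
        (Real.cos θ / Real.sin θ) θ := by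
      have := (Real.hasDerivAt_log hs.ne').comp θ (Real.hasDerivAt_sin θ)
      exact (Real.hasDerivAt_sin θ).log hs.ne'
    have hdF := hdC.mul hdD
    have t1 : Real.cos (2 * (m:ℝ) * θ) * (2 * (m:ℝ)) / (2 * (m:ℝ)) =
        Real.cos (2 * (m:ℝ) * θ) := by field_simp
    have t2 : Real.cos (2 * θ) * 2 / 2 = Real.cos (2 * θ) := by ring
    have t3 : (Real.sin (2 * (m:ℝ) * θ) / (2 * (m:ℝ)) - Real.sin (2 * θ) / 2) *
        (Real.cos θ / Real.sin θ) = Pm m θ / (2 * (m:ℝ)) - Pm 1 θ / 2 := by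
      have u1 := sin_mul_Pm m θ
      have u2 := hP1 θ
      field_simp
      linear_combination u1 - (m:ℝ) * u2
    have t4 : Vf m θ * (Real.sin θ * Real.log (Real.sin θ)) =
        (Real.cos (2 * (m:ℝ) * θ) - Real.cos (2 * θ)) * Real.log (Real.sin θ) := by
      rw [cos_diff_eq m θ]
      ring
    rw [hφ]
    simp only [t4]
    refine hdF.congr_deriv ?_
    simp only [Pi.sub_apply]
    rw [t1, t2, t3]
  have hFTC := integral_eq_sub_of_hasDerivAt_of_le Real.pi_pos.le hFcont hderiv
    (hφcont.intervalIntegrable _ _)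
  have hF0 : F 0 = 0 := by
    simp [hF]
  have hFπ : F Real.pi = 0 := by
    have e1 : Real.sin (2 * (m:ℝ) * Real.pi) = 0 := by
      rw [show 2 * (m:ℝ) * Real.pi = ((2 * m : ℕ) : ℝ) * Real.pi by push_cast; ring]
      exact Real.sin_nat_mul_pi _
    simp [hF, e1, Real.sin_two_pi]
  rw [hF0, hFπ, sub_zero] at hFTC
  have hsplit : ∫ θ in (0:ℝ)..Real.pi, φ θ =
      (∫ θ in (0:ℝ)..Real.pi, Vf m θ * (Real.sin θ * Real.log (Real.sin θ))) +
      ((∫ θ in (0:ℝ)..Real.pi, Pm m θ) / (2 * m) - (∫ θ in (0:ℝ)..Real.pi, Pm 1 θ) / 2) := by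
    have h0 : Continuous fun θ : ℝ => Real.sin θ * Real.log (Real.sin θ) :=
      Real.continuous_mul_log.comp Real.continuous_sin
    rw [hφ]
    beta_reduce
    rw [integral_add (f := fun θ => Vf m θ * (Real.sin θ * Real.log (Real.sin θ)))
        (g := fun θ => Pm m θ / (2 * (m:ℝ)) - Pm 1 θ / 2) (((Vf_continuous m).mul h0).intervalIntegrable _ _)
      ((((Pm_continuous m).div_const _).sub ((Pm_continuous 1).div_const _)).intervalIntegrable _ _),
      integral_sub (f := fun θ => Pm m θ / (2 * (m:ℝ))) (g := fun θ => Pm 1 θ / 2)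
        (((Pm_continuous m).div_const _).intervalIntegrable _ _)
        (((Pm_continuous 1).div_const _).intervalIntegrable _ _),
      _root_.intervalIntegral.integral_div, _root_.intervalIntegral.integral_div]
  rw [hFTC, integral_Pm m hm, integral_Pm 1 le_rfl] at hsplit
  linarith [hsplit]

lemma pointwise2 (n : ℕ) (θ : ℝ) :
    Real.sin θ ^ 2 * Real.log (Real.sin θ ^ 2) -
        ((U ℝ (n : ℤ)).eval (Real.cos θ)) ^ 2 * (Real.sin θ ^ 2 * Real.log (Real.sin θ ^ 2))
      = Vf (n + 1) θ * (Real.sin θ * Real.log (Real.sin θ)) := by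
  by_cases hs : Real.sin θ = 0
  · simp [hs]
  · have hU := Polynomial.Chebyshev.U_real_cos θ (n : ℤ)
    push_cast at hU
    have e1 : Real.cos (2 * ((n:ℝ) + 1) * θ) = 1 - 2 * Real.sin (((n:ℝ) + 1) * θ) ^ 2 := by
      rw [mul_assoc, Real.cos_two_mul]
      linear_combination 2 * Real.sin_sq_add_cos_sq (((n:ℝ) + 1) * θ)
    have e2 : Real.cos (2 * θ) = 1 - 2 * Real.sin θ ^ 2 := by
      rw [Real.cos_two_mul]
      linear_combination 2 * Real.sin_sq_add_cos_sq θ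
    have hr := cos_diff_eq (n + 1) θ
    push_cast at hr
    rw [e1, e2] at hr
    -- hr : (1 - 2 sin((n+1)θ)^2) - (1 - 2 sin θ^2) = Vf (n+1) θ * sin θ
    rw [Real.log_pow]
    push_cast
    linear_combination Real.log (Real.sin θ) * hr -
      2 * Real.log (Real.sin θ) * (Real.sin (((n:ℝ) + 1) * θ) +
        (U ℝ (n : ℤ)).eval (Real.cos θ) * Real.sin θ) * hU

open Real Polynomial Polynomial.Chebyshev MeasureTheory intervalIntegral in
lemma main_integral (n : ℕ) :
    ∫ x in (-1 : ℝ)..1,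
        ((U ℝ (n : ℤ)).eval x) ^ 2 * Real.log (((U ℝ (n : ℤ)).eval x) ^ 2) *
          (2 / Real.pi * Real.sqrt (1 - x ^ 2)) = (n : ℝ) / ((n : ℝ) + 1) := by
  have hπ : (0:ℝ) < π := Real.pi_pos
  set m : ℕ := n + 1 with hmdef
  have hm : 1 ≤ m := le_refl 1 |>.trans (by omega)
  set p : Polynomial ℝ := U ℝ (n : ℤ) with hp
  set f : ℝ → ℝ := fun x =>
    (p.eval x) ^ 2 * Real.log ((p.eval x) ^ 2) * (2 / π * Real.sqrt (1 - x ^ 2)) with hf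
  have hA : Continuous fun x : ℝ => (p.eval x) ^ 2 * Real.log ((p.eval x) ^ 2) :=
    Real.continuous_mul_log.comp ((Polynomial.continuous p).pow 2)
  have hB : Continuous fun x : ℝ => 2 / π * Real.sqrt (1 - x ^ 2) :=
    continuous_const.mul (Real.continuous_sqrt.comp (by fun_prop))
  have hfc : Continuous f := hA.mul hB
  have hsub := integral_comp_smul_deriv (a := (0:ℝ)) (b := π)
    (f := Real.cos) (f' := fun θ => -Real.sin θ) (g := f)
    (fun x _ => Real.hasDerivAt_cos x) (Continuous.continuousOn (by fun_prop)) hfc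
  rw [Real.cos_zero, Real.cos_pi] at hsub
  simp only [Function.comp, smul_eq_mul, neg_smul, neg_mul] at hsub
  rw [_root_.intervalIntegral.integral_neg, integral_symm (-1) 1] at hsub
  have hI : ∫ x in (-1:ℝ)..1, f x = ∫ θ in (0:ℝ)..π, Real.sin θ * f (Real.cos θ) := by
    linarith [hsub]
  have hpt : ∀ θ ∈ Set.uIcc (0:ℝ) π, Real.sin θ * f (Real.cos θ)
      = 2 / π * (Real.sin ((m:ℝ) * θ) ^ 2 * Real.log (Real.sin ((m:ℝ) * θ) ^ 2)
          - (p.eval (Real.cos θ)) ^ 2 * (Real.sin θ ^ 2 * Real.log (Real.sin θ ^ 2))) := by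
    intro θ hθ
    rw [Set.uIcc_of_le hπ.le] at hθ
    have hU := Polynomial.Chebyshev.U_real_cos θ (n : ℤ)
    push_cast at hU
    rw [show ((n:ℝ) + 1) = (m:ℝ) by rw [hmdef]; push_cast; ring] at hU
    rw [← hp] at hU
    have hsqrt : Real.sqrt (1 - Real.cos θ ^ 2) = Real.sin θ := by
      rw [show 1 - Real.cos θ ^ 2 = Real.sin θ ^ 2 by
          linear_combination - Real.sin_sq_add_cos_sq θ,
        Real.sqrt_sq (Real.sin_nonneg_of_nonneg_of_le_pi hθ.1 hθ.2)]
    by_cases hs : Real.sin θ = 0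
    · have hsm : Real.sin ((m:ℝ) * θ) = 0 := by rw [← hU, hs, mul_zero]
      rw [hs, hsm]
      simp
    · by_cases hev : p.eval (Real.cos θ) = 0
      · have hsm : Real.sin ((m:ℝ) * θ) = 0 := by rw [← hU, hp] at *; rw [hev, zero_mul]
        rw [hf]
        simp only [hsm, hev]
        simp
      · have hsm : Real.sin ((m:ℝ) * θ) ≠ 0 := by rw [← hU]; exact mul_ne_zero hev hs
        have he2 : (p.eval (Real.cos θ)) ^ 2
            = Real.sin ((m:ℝ) * θ) ^ 2 / Real.sin θ ^ 2 := by
          rw [← hU, mul_pow, mul_div_assoc, div_self (pow_ne_zero 2 hs), mul_one]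
        have hlog : Real.log ((p.eval (Real.cos θ)) ^ 2)
            = Real.log (Real.sin ((m:ℝ) * θ) ^ 2) - Real.log (Real.sin θ ^ 2) := by
          rw [he2, Real.log_div (pow_ne_zero 2 hsm) (pow_ne_zero 2 hs)]
        have he3 : (p.eval (Real.cos θ)) ^ 2 * Real.sin θ ^ 2
            = Real.sin ((m:ℝ) * θ) ^ 2 := by rw [← hU]; ring
        rw [hf]
        dsimp only
        rw [hsqrt, hlog]
        linear_combination (2 / π * Real.log (Real.sin ((m:ℝ) * θ) ^ 2)) * he3
  rw [hI, integral_congr hpt]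
  have hc1 : Continuous fun θ : ℝ =>
      Real.sin ((m:ℝ) * θ) ^ 2 * Real.log (Real.sin ((m:ℝ) * θ) ^ 2) :=
    Real.continuous_mul_log.comp (by fun_prop)
  have hslog : Continuous fun θ : ℝ => Real.sin θ ^ 2 * Real.log (Real.sin θ ^ 2) :=
    Real.continuous_mul_log.comp (by fun_prop)
  have hc2 : Continuous fun θ : ℝ =>
      (p.eval (Real.cos θ)) ^ 2 * (Real.sin θ ^ 2 * Real.log (Real.sin θ ^ 2)) :=
    (((Polynomial.continuous p).comp Real.continuous_cos).pow 2).mul hslog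
  rw [intervalIntegral.integral_const_mul,
    integral_sub (hc1.intervalIntegrable _ _) (hc2.intervalIntegrable _ _),
    sin_sq_log_periodic_integral m hm,
    ← integral_sub (hslog.intervalIntegrable _ _) (hc2.intervalIntegrable _ _)]
  have hcong : ∀ θ ∈ Set.uIcc (0:ℝ) π,
      Real.sin θ ^ 2 * Real.log (Real.sin θ ^ 2) -
        (p.eval (Real.cos θ)) ^ 2 * (Real.sin θ ^ 2 * Real.log (Real.sin θ ^ 2))
      = Vf m θ * (Real.sin θ * Real.log (Real.sin θ)) :=
    fun θ _ => pointwise2 n θ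
  rw [integral_congr hcong, key_integral m hm]
  rw [hmdef]
  push_cast
  have hn1 : ((n:ℝ) + 1) ≠ 0 := by positivity
  field_simp
  ring

end Aux

theorem entropy_orthonormal_chebyshevU (n : ℕ) :
    -∫ x in (-1 : ℝ)..1,
        (gegen 1 n x) ^ 2 * Real.log ((gegen 1 n x) ^ 2) *
          (2 / Real.pi * Real.sqrt (1 - x ^ 2)) =
      -(n : ℝ) / ((n : ℝ) + 1) := by
  simp only [gegen_eq_chebyshevU]
  rw [main_integral n, neg_div]
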